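/- For every integer j ≥ 1 and every t ≥ 0, p_j(t) = e^{−t}·∫_0^t ((−1)^{j−1}·p_{j−1}(−s) − e^{s}·p_{j−1}(s))/s ds, where p_{j−1} is evaluated at negative arguments via its everywhere-convergent power series and the integrand extends continuously to s = 0. In particular p_1(t) = e^{−t}·∫_0^t (e^{s} − 1)/s ds. -/

import Mathlib

open MeasureTheory ProbabilityTheory Real

open MeasureTheory ProbabilityTheory Real

/-- Signless Stirling numbers of the first kind: coefficient of `x^j` in `x(x+1)⋯(x+k-1)`. -/
noncomputable def stirling1 (k j : ℕ) : ℝ :=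
  (∏ i ∈ Finset.range k, (Polynomial.X + Polynomial.C (i : ℝ))).coeff j

/-- Stirling numbers of the second kind. -/
def stirling2 : ℕ → ℕ → ℕ
  | 0, 0 => 1
  | 0, _ + 1 => 0
  | _ + 1, 0 => 0
  | n + 1, k + 1 => (k + 1) * stirling2 n (k + 1) + stirling2 n k

/-- `p_j(t) = e^{-t} Σ_{k≥j} (t^k/k!) σ₁(k,j)/k!` (terms with `k<j` vanish). -/
noncomputable def pfn (j : ℕ) (t : ℝ) : ℝ :=
  Real.exp (-t) * ∑' k : ℕ, t ^ k / (Nat.factorial k : ℝ) * (stirling1 k j / (Nat.factorial k : ℝ))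

/-- `q_j(t) = e^{-t} Σ_{k≥0} (t^k/(k+1)!) Σ_{i=0}^k σ₁(i,j)/i!`. -/
noncomputable def qfn (j : ℕ) (t : ℝ) : ℝ :=
  Real.exp (-t) * ∑' k : ℕ, t ^ k / (Nat.factorial (k + 1) : ℝ) *
    ∑ i ∈ Finset.range (k + 1), stirling1 i j / (Nat.factorial i : ℝ)

/-- `I(t,s) = ∫_s^t e^{-ξ}/ξ dξ`. -/
noncomputable def Ifun (t s : ℝ) : ℝ := ∫ ξ in s..t, Real.exp (-ξ) / ξ

/-- `I(s) = ∫_s^∞ e^{-ξ}/ξ dξ`. -/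
noncomputable def Iinf (s : ℝ) : ℝ := ∫ ξ in Set.Ioi s, Real.exp (-ξ) / ξ

/-- `I₂(t,s) = ∫_s^t e^{-ξ}/ξ² dξ`. -/
noncomputable def I2fun (t s : ℝ) : ℝ := ∫ ξ in s..t, Real.exp (-ξ) / ξ ^ 2

/-- `I₂(s) = ∫_s^∞ e^{-ξ}/ξ² dξ`. -/
noncomputable def I2inf (s : ℝ) : ℝ := ∫ ξ in Set.Ioi s, Real.exp (-ξ) / ξ ^ 2

/-- `J(t) = ∫_0^t (e^ξ - 1)/ξ dξ`. -/
noncomputable def Jfun (t : ℝ) : ℝ := ∫ ξ in (0:ℝ)..t, (Real.exp ξ - 1) / ξ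

/-!
Write `A_j(t) = ∑ₖ σ₁(k,j) tᵏ / (k!)²`, so that `p_j(t) = e^{-t} A_j(t)`. The Cauchy product
`e^s · (-1)^j A_j(-s)` has coefficients `σ₁(k+1,j+1) / (k!)²`: this is the coefficient of
`x^{j+1}` in the Chu–Vandermonde expansion `x(x+1)⋯(x+k) = x · (x+k)ₖ = x ∑_{a+b=k} C(k,a) (x)ₐ (k)_b`,
read through `(x)ₐ = ∑ⱼ (-1)^{a+j} σ₁(a,j) xʲ`. Subtracting `e^s p_j(s) = A_j(s)` and using
`σ₁(k+1,j+1) - σ₁(k,j) = k σ₁(k,j+1)`, the numerator becomes `s · A_{j+1}'(s)`; so off `s = 0`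
the integrand is the everywhere convergent power series `A_{j+1}'(s)`, and integrating it termwise
gives `A_{j+1}(t)`.
-/

open Polynomial Finset Nat
open scoped Interval

theorem Polynomial.coeff_comp_neg_X {R : Type*} [CommRing R] (p : R[X]) (n : ℕ) :
    (p.comp (-X)).coeff n = (-1) ^ n * p.coeff n := by
  induction p using Polynomial.induction_on' with
  | add p q hp hq => rw [add_comp, coeff_add, coeff_add, hp, hq, mul_add]
  | monomial k a =>
    rw [monomial_comp, neg_pow, mul_left_comm, ← C_1, ← C_neg, ← C_pow, coeff_C_mul,
      coeff_C_mul_X_pow, coeff_monomial]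
    split_ifs <;> subst_vars <;> simp_all

theorem Polynomial.coeff_le_eval_one (p : ℕ[X]) (j : ℕ) : p.coeff j ≤ p.eval 1 := by
  rcases le_or_gt j p.natDegree with hj | hj
  · rw [eval_eq_sum_range]
    simpa using single_le_sum (f := fun i => p.coeff i) (fun _ _ => Nat.zero_le _)
      (mem_range.2 (Nat.lt_succ_of_le hj))
  · simp [coeff_eq_zero_of_natDegree_lt hj]

theorem Polynomial.descPochhammer_smeval_eq_eval {R : Type*} [CommRing R] (n : ℕ) (r : R) :
    (descPochhammer ℤ n).smeval r = (descPochhammer R n).eval r := by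
  rw [← aeval_eq_smeval, aeval_def, ← eval_map, descPochhammer_map]

/-- Chu–Vandermonde for `(X + k)ₖ`, since `(X + 1)(X + 2)⋯(X + k) = (X + k)ₖ`. -/
theorem Polynomial.ascPochhammer_succ_eq_sum {R : Type*} [CommRing R] [IsDomain R] [Infinite R]
    (k : ℕ) :
    ascPochhammer R (k + 1) = X * ∑ x ∈ antidiagonal k,
      C ((k.choose x.1 * k.descFactorial x.2 : ℕ) : R) * descPochhammer R x.1 := by
  refine Polynomial.funext fun r => ?_
  have h := Ring.descPochhammer_smeval_add (r := r) (s := (k : R)) k (Commute.all _ _)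
  rw [descPochhammer_smeval_eq_ascPochhammer, add_sub_cancel_right] at h
  simp only [descPochhammer_smeval_eq_eval, descPochhammer_eval_eq_descFactorial] at h
  simp only [ascPochhammer_succ_left, eval_mul, eval_X, eval_comp, eval_add, eval_one,
    ← ascPochhammer_smeval_eq_eval, h, eval_finsetSum, eval_C, Nat.cast_mul]
  congr 1
  exact sum_congr rfl fun x _ => by ring

theorem hasSum_sum_antidiagonal_of_summable_norm {R : Type*} [NormedRing R] [CompleteSpace R]
    {f g : ℕ → R} (hf : Summable fun n => ‖f n‖) (hg : Summable fun n => ‖g n‖) :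
    HasSum (fun n => ∑ kl ∈ antidiagonal n, f kl.1 * g kl.2) ((∑' n, f n) * ∑' n, g n) := by
  rw [tsum_mul_tsum_eq_tsum_sum_antidiagonal_of_summable_norm hf hg]
  exact (summable_norm_sum_mul_antidiagonal_of_summable_norm hf hg).of_norm.hasSum

theorem hasSum_intervalIntegral_of_hasSum_pow {c : ℕ → ℝ} {f : ℝ → ℝ} {t : ℝ}
    (hc : Summable fun k => ‖c k‖ * |t| ^ k)
    (hf : ∀ᵐ s, s ∈ Ι 0 t → HasSum (fun k => c k * s ^ k) (f s)) :
    HasSum (fun k => c k * (t ^ (k + 1) / (k + 1))) (∫ s in 0..t, f s) := by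
  have h := intervalIntegral.hasSum_integral_of_dominated_convergence
    (F := fun k s => c k * s ^ k) (fun k _ => ‖c k‖ * |t| ^ k)
    (fun k => (continuous_const.mul (continuous_pow k)).aestronglyMeasurable)
    (fun k => ae_of_all _ fun s hs => by
      have hst : |s| ≤ |t| := by
        simpa using Set.abs_sub_left_of_mem_uIcc (Set.uIoc_subset_uIcc hs)
      rw [norm_mul, norm_pow, Real.norm_eq_abs s]
      gcongr)
    (ae_of_all _ fun _ _ => hc) intervalIntegrable_const hf
  simpa [intervalIntegral.integral_const_mul, integral_pow] using h

theorem stirling1_eq_coeff_ascPochhammer (k j : ℕ) :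
    stirling1 k j = (ascPochhammer ℝ k).coeff j := by
  suffices ∏ i ∈ range k, (X + C (i : ℝ)) = ascPochhammer ℝ k by rw [stirling1, this]
  induction k with
  | zero => simp
  | succ k ih => rw [prod_range_succ, ih, ascPochhammer_succ_right, map_natCast]

theorem stirling1_eq_natCast_coeff (k j : ℕ) :
    stirling1 k j = ((ascPochhammer ℕ k).coeff j : ℝ) := by
  rw [stirling1_eq_coeff_ascPochhammer, ← ascPochhammer_map (Nat.castRingHom ℝ), coeff_map,
    eq_natCast]

theorem stirling1_nonneg (k j : ℕ) : 0 ≤ stirling1 k j := by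
  rw [stirling1_eq_natCast_coeff]
  exact Nat.cast_nonneg _

theorem stirling1_le_factorial (k j : ℕ) : stirling1 k j ≤ k ! := by
  have h := (ascPochhammer ℕ k).coeff_le_eval_one j
  rw [ascPochhammer_eval_one, Nat.cast_id] at h
  rw [stirling1_eq_natCast_coeff]
  exact_mod_cast h

theorem stirling1_zero_right (k : ℕ) : stirling1 k 0 = if k = 0 then 1 else 0 := by
  rw [stirling1_eq_coeff_ascPochhammer, coeff_zero_eq_eval_zero, ascPochhammer_eval_zero]

theorem stirling1_zero_succ (j : ℕ) : stirling1 0 (j + 1) = 0 := by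
  simp [stirling1_eq_coeff_ascPochhammer, coeff_one]

theorem stirling1_succ_succ (k j : ℕ) :
    stirling1 (k + 1) (j + 1) = stirling1 k j + k * stirling1 k (j + 1) := by
  simp only [stirling1_eq_coeff_ascPochhammer, ascPochhammer_succ_right, mul_add, coeff_add,
    coeff_mul_X, ← C_eq_natCast, coeff_mul_C, mul_comm]

theorem coeff_descPochhammer (m j : ℕ) :
    (descPochhammer ℝ m).coeff j = (-1) ^ (m + j) * stirling1 m j := by
  have h : descPochhammer ℝ m = C ((-1) ^ m) * (ascPochhammer ℝ m).comp (-X) := by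
    refine Polynomial.funext fun r => ?_
    simp [ascPochhammer_eval_neg_eq_descPochhammer, ← mul_assoc, ← mul_pow]
  rw [h, coeff_C_mul, coeff_comp_neg_X, ← stirling1_eq_coeff_ascPochhammer, pow_add, mul_assoc]

theorem stirling1_succ_succ_div_sq (k j : ℕ) :
    stirling1 (k + 1) (j + 1) / (k ! : ℝ) ^ 2 =
      ∑ x ∈ antidiagonal k, (-1) ^ (x.1 + j) * stirling1 x.1 j / (x.1 ! : ℝ) ^ 2 / x.2 ! := by
  rw [stirling1_eq_coeff_ascPochhammer, ascPochhammer_succ_eq_sum, coeff_X_mul, finsetSum_coeff,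
    sum_div]
  refine sum_congr rfl fun ⟨a, b⟩ hab => ?_
  obtain rfl : a + b = k := mem_antidiagonal.1 hab
  have hfac : (a + b).choose a * (a + b).descFactorial b * (a ! * a ! * b !) =
      (a + b)! * (a + b)! := by
    have hchoose : (a + b).choose a * a ! * b ! = (a + b)! := by
      rw [Nat.choose_symm_add]; exact add_choose_mul_factorial_mul_factorial a b
    have hdesc : a ! * (a + b).descFactorial b = (a + b)! := by
      simpa using factorial_mul_descFactorial (Nat.le_add_left b a)
    calc _ = ((a + b).choose a * a ! * b !) * (a ! * (a + b).descFactorial b) := by ring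
      _ = _ := by rw [hchoose, hdesc]
  rw [coeff_C_mul, coeff_descPochhammer, div_div, div_eq_div_iff (by positivity) (by positivity)]
  have hfacR := congrArg (Nat.cast : ℕ → ℝ) hfac
  push_cast at hfacR ⊢
  linear_combination (-1) ^ (a + j) * stirling1 a j * hfacR

theorem norm_stirling1_div_sq_mul_pow_le (j k : ℕ) (t : ℝ) :
    ‖stirling1 k j / (k ! : ℝ) ^ 2 * t ^ k‖ ≤ |t| ^ k / k ! := by
  have hk : (0 : ℝ) < k ! := by positivity
  rw [norm_mul, norm_div, norm_pow, norm_pow, Real.norm_of_nonneg (stirling1_nonneg k j),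
    Real.norm_of_nonneg hk.le, Real.norm_eq_abs]
  calc stirling1 k j / (k ! : ℝ) ^ 2 * |t| ^ k ≤ k ! / (k ! : ℝ) ^ 2 * |t| ^ k := by
        gcongr; exact stirling1_le_factorial k j
    _ = |t| ^ k / k ! := by field_simp

theorem summable_norm_stirling1_div_sq_mul_pow (j : ℕ) (t : ℝ) :
    Summable fun k => ‖stirling1 k j / (k ! : ℝ) ^ 2 * t ^ k‖ :=
  .of_nonneg_of_le (fun _ => norm_nonneg _) (norm_stirling1_div_sq_mul_pow_le j · t)
    (Real.summable_pow_div_factorial |t|)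

theorem hasSum_exp_mul_pfn (j : ℕ) (t : ℝ) :
    HasSum (fun k => stirling1 k j / (k ! : ℝ) ^ 2 * t ^ k) (exp t * pfn j t) := by
  have hterm : (fun k => t ^ k / k ! * (stirling1 k j / k !)) =
      fun k => stirling1 k j / (k ! : ℝ) ^ 2 * t ^ k := by
    ext k; ring
  rw [pfn, ← mul_assoc, ← exp_add, add_neg_cancel, exp_zero, one_mul, hterm]
  exact (summable_norm_stirling1_div_sq_mul_pow j t).of_norm.hasSum

theorem pfn_zero (t : ℝ) : pfn 0 t = exp (-t) := by
  have h : exp t * pfn 0 t = 1 := by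
    rw [(hasSum_exp_mul_pfn 0 t).unique
      (hasSum_single 0 fun k hk => by simp [stirling1_zero_right, hk])]
    simp [stirling1_zero_right]
  rw [exp_neg, eq_inv_of_mul_eq_one_right h]

theorem hasSum_neg_one_pow_mul_pfn_neg (j : ℕ) (s : ℝ) :
    HasSum (fun k => stirling1 (k + 1) (j + 1) / (k ! : ℝ) ^ 2 * s ^ k)
      ((-1) ^ j * pfn j (-s)) := by
  set f : ℕ → ℝ := fun i => (-1) ^ j * (stirling1 i j / (i ! : ℝ) ^ 2 * (-s) ^ i)
  have hf : Summable fun i => ‖f i‖ := by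
    simpa [f, norm_mul] using summable_norm_stirling1_div_sq_mul_pow j (-s)
  have hprod := hasSum_sum_antidiagonal_of_summable_norm hf
    (NormedSpace.norm_expSeries_div_summable s)
  have hvalue : (∑' i, f i) * ∑' n, s ^ n / n ! = (-1) ^ j * pfn j (-s) := by
    rw [tsum_mul_left, (hasSum_exp_mul_pfn j (-s)).tsum_eq,
      (NormedSpace.expSeries_div_hasSum_exp s).tsum_eq, ← Real.exp_eq_exp_ℝ, mul_assoc,
      mul_right_comm (exp (-s)), ← exp_add, neg_add_cancel, exp_zero, one_mul]
  rw [← hvalue]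
  refine hprod.congr_fun fun k => ?_
  rw [stirling1_succ_succ_div_sq, sum_mul]
  refine sum_congr rfl fun ⟨a, b⟩ hab => ?_
  obtain rfl : a + b = k := mem_antidiagonal.1 hab
  simp only [f, neg_pow s, pow_add]
  ring

theorem hasSum_neg_one_pow_mul_pfn_neg_sub_exp_mul_pfn (j : ℕ) (s : ℝ) :
    HasSum (fun k => stirling1 (k + 1) (j + 1) / (k ! * (k + 1)! : ℝ) * s ^ k * s)
      ((-1) ^ j * pfn j (-s) - exp s * pfn j s) := by
  have hdiff : HasSum (fun k => k * stirling1 k (j + 1) / (k ! : ℝ) ^ 2 * s ^ k)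
      ((-1) ^ j * pfn j (-s) - exp s * pfn j s) :=
    ((hasSum_neg_one_pow_mul_pfn_neg j s).sub (hasSum_exp_mul_pfn j s)).congr_fun fun k => by
      rw [stirling1_succ_succ]; ring
  have hshift := (hasSum_nat_add_iff' 1).mpr hdiff
  rw [sum_range_one, Nat.cast_zero, zero_mul, zero_div, zero_mul, sub_zero] at hshift
  refine hshift.congr_fun fun k => ?_
  push_cast [Nat.factorial_succ]
  field_simp
  ring

theorem pfn_succ (j : ℕ) (t : ℝ) :
    pfn (j + 1) t =
      exp (-t) * ∫ s in (0 : ℝ)..t, ((-1) ^ j * pfn j (-s) - exp s * pfn j s) / s := by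
  set c : ℕ → ℝ := fun k => stirling1 (k + 1) (j + 1) / (k ! * (k + 1)! : ℝ)
  have hc : Summable fun k => ‖c k‖ * |t| ^ k := by
    refine .of_nonneg_of_le (fun _ => by positivity) (fun k => ?_)
      (Real.summable_pow_div_factorial |t|)
    have hk : (0 : ℝ) < k ! := by positivity
    rw [Real.norm_of_nonneg (by positivity [stirling1_nonneg (k + 1) (j + 1)]),
      div_mul_eq_mul_div, div_le_div_iff₀ (by positivity) hk]
    have := stirling1_le_factorial (k + 1) (j + 1)
    calc stirling1 (k + 1) (j + 1) * |t| ^ k * k ! ≤ (k + 1)! * |t| ^ k * k ! := by gcongr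
      _ = |t| ^ k * (k ! * (k + 1)!) := by ring
  -- `s = 0` is a null set, so the junk value of the integrand there does not matter.
  have hint := hasSum_intervalIntegral_of_hasSum_pow hc (by
    filter_upwards [Measure.ae_ne volume 0] with s hs _
    exact ((hasSum_neg_one_pow_mul_pfn_neg_sub_exp_mul_pfn j s).div_const s).congr_fun
      fun k => by simp only [c]; field_simp)
  have hseries := (hasSum_nat_add_iff' 1).mpr (hasSum_exp_mul_pfn (j + 1) t)
  rw [sum_range_one, stirling1_zero_succ, zero_div, zero_mul, sub_zero] at hseries
  have heq := hint.unique (hseries.congr_fun fun k => by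
    simp only [c]
    push_cast [Nat.factorial_succ]
    field_simp)
  rw [heq, ← mul_assoc, ← exp_add, neg_add_cancel, exp_zero, one_mul]

theorem stmt12_general (j : ℕ) (hj : 1 ≤ j) (t : ℝ) :
    pfn j t = Real.exp (-t) * ∫ s in (0:ℝ)..t,
        ((-1 : ℝ) ^ (j - 1) * pfn (j - 1) (-s) - Real.exp s * pfn (j - 1) s) / s ∧
    pfn 1 t = Real.exp (-t) * ∫ s in (0:ℝ)..t, (Real.exp s - 1) / s := by
  obtain ⟨i, rfl⟩ : ∃ i, j = i + 1 := ⟨j - 1, by omega⟩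
  refine ⟨by simpa using pfn_succ i t, ?_⟩
  rw [pfn_succ 0 t]
  congr 1
  refine intervalIntegral.integral_congr fun s _ => ?_
  rw [pow_zero, one_mul, pfn_zero, pfn_zero, neg_neg, ← exp_add, add_neg_cancel, exp_zero]

/-- The recursion `p_j(t) = e^{-t}∫_0^t ((-1)^{j-1} p_{j-1}(-s) - e^s p_{j-1}(s))/s ds`
for `j ≥ 1`, `t ≥ 0`; in particular `p_1(t) = e^{-t}∫_0^t (e^s - 1)/s ds`. -/
theorem stmt12 (j : ℕ) (hj : 1 ≤ j) (t : ℝ) (ht : 0 ≤ t) :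
    pfn j t = Real.exp (-t) * ∫ s in (0:ℝ)..t,
        ((-1 : ℝ) ^ (j - 1) * pfn (j - 1) (-s) - Real.exp s * pfn (j - 1) s) / s ∧
    pfn 1 t = Real.exp (-t) * ∫ s in (0:ℝ)..t, (Real.exp s - 1) / s :=
  stmt12_general j hj t
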